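/- In the polynomial ring ℝ[t₁, t₂, t₃, t₄, t₁₂, t₁₃, t₂₃], let c₁₂ := t₁t₂ + t₃t₄, c₂₃ := t₂t₃ + t₁t₄, c₁₃ := t₁t₃ + t₂t₄, c₀ := 4 − t₁² − t₂² − t₃² − t₄² − t₁t₂t₃t₄, k := t₁₂² + t₂₃² + t₁₃² + t₁₂t₂₃t₁₃ − c₁₂t₁₂ − c₂₃t₂₃ − c₁₃t₁₃ − c₀, s := 2t₂₃² − c₂₃t₂₃ − 2t₁₃² + c₁₃t₁₃, and h := (2t₁₃ + t₁₂t₂₃ − c₁₃)·(4t₂₃ − c₂₃) + (−2t₂₃ − t₁₂t₁₃ + c₂₃)·(−4t₁₃ + c₁₃). Then h does not belong to the ideal generated by k and s. -/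
import Mathlib


namespace FrickeStmt8

open MvPolynomial

/-- The seven trace variables `t₁, t₂, t₃, t₄, t₁₂, t₁₃, t₂₃` of `ℝ[K]`. -/
noncomputable def t₁ : MvPolynomial (Fin 7) ℝ := X 0
noncomputable def t₂ : MvPolynomial (Fin 7) ℝ := X 1
noncomputable def t₃ : MvPolynomial (Fin 7) ℝ := X 2
noncomputable def t₄ : MvPolynomial (Fin 7) ℝ := X 3
noncomputable def t₁₂ : MvPolynomial (Fin 7) ℝ := X 4
noncomputable def t₁₃ : MvPolynomial (Fin 7) ℝ := X 5
noncomputable def t₂₃ : MvPolynomial (Fin 7) ℝ := X 6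

noncomputable def c₁₂ : MvPolynomial (Fin 7) ℝ := t₁ * t₂ + t₃ * t₄
noncomputable def c₂₃ : MvPolynomial (Fin 7) ℝ := t₂ * t₃ + t₁ * t₄
noncomputable def c₁₃ : MvPolynomial (Fin 7) ℝ := t₁ * t₃ + t₂ * t₄
noncomputable def c₀ : MvPolynomial (Fin 7) ℝ :=
  4 - t₁ ^ 2 - t₂ ^ 2 - t₃ ^ 2 - t₄ ^ 2 - t₁ * t₂ * t₃ * t₄

/-- The Fricke polynomial `k`. -/
noncomputable def k : MvPolynomial (Fin 7) ℝ :=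
  t₁₂ ^ 2 + t₂₃ ^ 2 + t₁₃ ^ 2 + t₁₂ * t₂₃ * t₁₃
    - c₁₂ * t₁₂ - c₂₃ * t₂₃ - c₁₃ * t₁₃ - c₀

/-- The polynomial `s` cutting out the dependency locus. -/
noncomputable def s : MvPolynomial (Fin 7) ℝ :=
  2 * t₂₃ ^ 2 - c₂₃ * t₂₃ - 2 * t₁₃ ^ 2 + c₁₃ * t₁₃

/-- The polynomial `h = H₁₂(s)`, the derivative of `s` along the Hamiltonian
vector field of the trace function `p₁₂ = t₁₂`. -/
noncomputable def h : MvPolynomial (Fin 7) ℝ :=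
  (2 * t₁₃ + t₁₂ * t₂₃ - c₁₃) * (4 * t₂₃ - c₂₃)
    + (-2 * t₂₃ - t₁₂ * t₁₃ + c₂₃) * (-4 * t₁₃ + c₁₃)

/-- Lemma 3.4 (key computation): `H₁₂(s)` is not in the ideal `(k, s)`. -/
theorem h_not_mem_ideal : h ∉ Ideal.span ({k, s} : Set (MvPolynomial (Fin 7) ℝ)) := by
  intro hm
  rw [Ideal.mem_span_pair] at hm
  obtain ⟨a, b, hab⟩ := hm
  have := congrArg (eval fun i : Fin 7 => if (i : ℕ) < 4 then (0:ℝ) else 1) hab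
  simp only [map_add, map_mul, h, k, s, c₁₂, c₂₃, c₁₃, c₀, t₁, t₂, t₃, t₄, t₁₂, t₁₃, t₂₃,
    map_sub, map_pow, map_ofNat, map_neg, eval_X, map_one] at this
  norm_num [show ((3:Fin 7):ℕ)=3 from rfl, show ((4:Fin 7):ℕ)=4 from rfl,
    show ((5:Fin 7):ℕ)=5 from rfl, show ((6:Fin 7):ℕ)=6 from rfl] at this

end FrickeStmt8
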